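/- arXiv:1803.02046 — 2 statements merged into one kernel-verified Lean document; each statement's English description precedes it below -/
import Mathlib

section
/- Let A be a unital algebra over ℂ, M a unital A-bimodule, and m, n positive integers with m ≠ n. Let δ : A → M be an (m,n)-Jordan derivable mapping at zero with δ(1) = 0, and let P be an idempotent in A. Then for every A ∈ A, P·δ(A)·P = P·δ(PAP)·P. -/
/-!
Every idempotent `E` is orthogonal to `1 - E`, and as `δ(1 - E) = -δ(E)` the defining identity for
this pair reads `(m + n)·δ(E) = 2m·δ(E)·E + 2n·E·δ(E)`; cutting it down by `E` on either side and
using `m ≠ n` gives `δ(E) = 0`. With `Q = 1 - P`, write `a = PaP + PaQ + QaP + QaQ`. The elements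
`P + PaQ` and `P + QaP` are idempotents, so `δ` kills `PaQ` and `QaP`; and `QaQ` is orthogonal
to `P`, so with `δ(P) = 0` the identity for this pair gives `(m + n)·P·δ(QaQ)·P = 0`.
-/

open MulOpposite

theorem isIdempotentElem_add_of_mul_self_eq_zero {A : Type*} [NonUnitalNonAssocSemiring A]
    {P x : A} (hP : IsIdempotentElem P) (hx : x * x = 0) (hPx : P * x + x * P = x) :
    IsIdempotentElem (P + x) := by
  rw [IsIdempotentElem, add_mul, mul_add, mul_add, hP.eq, hx, add_zero, add_assoc, hPx]

section Ring

variable {A : Type*} [Ring A] {P : A}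

theorem IsIdempotentElem.add_mul_mul_one_sub (hP : IsIdempotentElem P) (a : A) :
    IsIdempotentElem (P + P * a * (1 - P)) := by
  refine isIdempotentElem_add_of_mul_self_eq_zero hP ?_ ?_
  · simp only [mul_assoc, hP.one_sub_mul_self, ← mul_assoc (1 - P) P, zero_mul, mul_zero]
  · simp only [mul_assoc, hP.one_sub_mul_self, mul_zero, add_zero, ← mul_assoc P P, hP.eq]

theorem IsIdempotentElem.add_one_sub_mul_mul (hP : IsIdempotentElem P) (a : A) :
    IsIdempotentElem (P + (1 - P) * a * P) := by
  refine isIdempotentElem_add_of_mul_self_eq_zero hP ?_ ?_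
  · simp only [mul_assoc, hP.mul_one_sub_self, ← mul_assoc P (1 - P), zero_mul, mul_zero]
  · simp only [mul_assoc, hP.eq, ← mul_assoc P (1 - P), hP.mul_one_sub_self, zero_mul, zero_add]

end Ring

theorem isIdempotentElem_op {A : Type*} [Mul A] {E : A} :
    IsIdempotentElem (op E) ↔ IsIdempotentElem E := by
  rw [IsIdempotentElem, IsIdempotentElem, ← op_mul, op_inj]

theorem IsIdempotentElem.smul_smul_self {A M : Type*} [Monoid A] [MulAction A M] {E : A}
    (hE : IsIdempotentElem E) (x : M) : E • E • x = E • x := by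
  rw [smul_smul, hE.eq]

section Bimodule

variable {A M : Type*} [Ring A] [AddCommGroup M] [Module A M] [Module Aᵐᵒᵖ M]
  [SMulCommClass A Aᵐᵒᵖ M] [IsAddTorsionFree M] {E : A} {m n : ℕ} {d : M}

theorem IsIdempotentElem.eq_zero_of_add_nsmul_eq (hE : IsIdempotentElem E) (hmn : m ≠ n)
    (h : (m + n) • d = (2 * m) • (op E • d) + (2 * n) • (E • d)) : d = 0 := by
  have hswap (x : M) : op E • E • x = E • op E • x := (smul_comm E (op E) x).symm
  have hl := congrArg (E • ·) h
  have hr := congrArg (op E • ·) h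
  have hlr := congrArg (E • op E • ·) h
  simp only [smul_add, smul_comm _ (_ : ℕ), hE.smul_smul_self,
    (isIdempotentElem_op.2 hE).smul_smul_self, hswap] at hl hr hlr
  generalize E • op E • d = z at hl hr hlr
  generalize E • d = x at h hl hr
  generalize op E • d = y at h hl hr
  have hz : z = 0 := by
    refine (IsAddTorsionFree.zsmul_eq_zero_iff_right (n := (m : ℤ) + n) (by omega)).1 ?_
    linear_combination (norm := module) -hlr
  subst hz
  have hx : x = 0 := by
    refine (IsAddTorsionFree.zsmul_eq_zero_iff_right (n := (m : ℤ) - n) (by omega)).1 ?_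
    linear_combination (norm := module) hl
  have hy : y = 0 := by
    refine (IsAddTorsionFree.zsmul_eq_zero_iff_right (n := (n : ℤ) - m) (by omega)).1 ?_
    linear_combination (norm := module) hr
  subst hx hy
  refine (IsAddTorsionFree.zsmul_eq_zero_iff_right (n := (m : ℤ) + n) (by omega)).1 ?_
  linear_combination (norm := module) h

end Bimodule

section JordanDerivable

variable {A M : Type*} [Ring A] [AddCommGroup M] [Module A M] [Module Aᵐᵒᵖ M]

/-- `δ(X)·Y` is written `op Y • δ X`. -/
def IsJordanDerivableAtZero (m n : ℕ) (δ : A → M) : Prop :=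
  ∀ X Y : A, X * Y = 0 → Y * X = 0 →
    (m + n) • δ (X * Y + Y * X) =
      (2 * m) • (op Y • δ X) + (2 * m) • (op X • δ Y)
        + (2 * n) • (X • δ Y) + (2 * n) • (Y • δ X)

variable [IsAddTorsionFree M] {m n : ℕ} {δ : A →+ M}

namespace IsJordanDerivableAtZero

theorem nsmul_add_nsmul_eq_zero (hδ : IsJordanDerivableAtZero m n δ) {X Y : A}
    (hXY : X * Y = 0) (hYX : Y * X = 0) :
    m • (op Y • δ X + op X • δ Y) + n • (X • δ Y + Y • δ X) = 0 := by
  have h := hδ X Y hXY hYX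
  rw [hXY, hYX, add_zero, map_zero, smul_zero] at h
  refine (nsmul_eq_zero_iff_right two_ne_zero).1 ?_
  rw [h]
  simp only [smul_add, mul_smul, add_assoc]

variable [SMulCommClass A Aᵐᵒᵖ M]

theorem map_idempotent (hδ : IsJordanDerivableAtZero m n δ) (h1 : δ 1 = 0) (hmn : m ≠ n)
    {E : A} (hE : IsIdempotentElem E) : δ E = 0 := by
  refine hE.eq_zero_of_add_nsmul_eq hmn ?_
  have h := hδ.nsmul_add_nsmul_eq_zero hE.mul_one_sub_self hE.one_sub_mul_self
  rw [map_sub, h1, zero_sub, op_sub, op_one, sub_smul, one_smul, sub_smul, one_smul,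
    smul_neg, smul_neg] at h
  generalize δ E = d at h ⊢
  generalize op E • d = y at h ⊢
  generalize E • d = x at h ⊢
  linear_combination (norm := module) h

theorem smul_op_smul_map_eq_zero_of_orthogonal (hδ : IsJordanDerivableAtZero m n δ)
    (h1 : δ 1 = 0) (hmn : m ≠ n) {P q : A} (hP : IsIdempotentElem P)
    (hqP : q * P = 0) (hPq : P * q = 0) : P • op P • δ q = 0 := by
  have h := congrArg (P • op P • ·) (hδ.nsmul_add_nsmul_eq_zero hqP hPq)
  have hswap (x : M) : op P • P • x = P • op P • x := (smul_comm P (op P) x).symm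
  simp only [hδ.map_idempotent h1 hmn hP, smul_zero, add_zero, zero_add, smul_add,
    smul_comm _ (_ : ℕ), hswap, hP.smul_smul_self, (isIdempotentElem_op.2 hP).smul_smul_self] at h
  rw [← add_nsmul] at h
  exact (nsmul_eq_zero_iff_right (by omega)).1 h

theorem smul_op_smul_map_eq (hδ : IsJordanDerivableAtZero m n δ) (h1 : δ 1 = 0) (hmn : m ≠ n)
    {P : A} (hP : IsIdempotentElem P) (a : A) :
    P • op P • δ a = P • op P • δ (P * a * P) := by
  have hδP := hδ.map_idempotent h1 hmn hP
  have hPaQ : δ (P * a * (1 - P)) = 0 := by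
    simpa only [map_add, hδP, zero_add] using hδ.map_idempotent h1 hmn (hP.add_mul_mul_one_sub a)
  have hQaP : δ ((1 - P) * a * P) = 0 := by
    simpa only [map_add, hδP, zero_add] using hδ.map_idempotent h1 hmn (hP.add_one_sub_mul_mul a)
  have hQaQ :=
    hδ.smul_op_smul_map_eq_zero_of_orthogonal h1 hmn hP (q := (1 - P) * a * (1 - P))
      (by rw [mul_assoc, hP.one_sub_mul_self, mul_zero])
      (by rw [← mul_assoc, ← mul_assoc, hP.mul_one_sub_self, zero_mul, zero_mul])
  have hsplit : a = P * a * P + P * a * (1 - P) + (1 - P) * a * P + (1 - P) * a * (1 - P) := by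
    noncomm_ring
  conv_lhs => rw [hsplit]
  simp only [map_add, smul_add, hPaQ, hQaP, hQaQ, add_zero]

end IsJordanDerivableAtZero

end JordanDerivable

theorem mn_jordan_derivable_at_zero_corner_general
    {A M : Type*} [Ring A]
    [AddCommGroup M] [Module ℂ M] [Module A M] [Module Aᵐᵒᵖ M]
    [SMulCommClass A Aᵐᵒᵖ M]
    (m n : ℕ) (hmn : m ≠ n)
    (δ : A → M) (hadd : ∀ a b : A, δ (a + b) = δ a + δ b)
    (hδ1 : δ 1 = 0)
    (hzero : ∀ X Y : A, X * Y = 0 → Y * X = 0 →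
      (m + n) • δ (X * Y + Y * X) =
        (2 * m) • (op Y • δ X) + (2 * m) • (op X • δ Y)
          + (2 * n) • (X • δ Y) + (2 * n) • (Y • δ X))
    (P : A) (hP : P * P = P) (a : A) :
    P • (op P • δ a) = P • (op P • δ (P * a * P)) := by
  have : IsAddTorsionFree M := .of_isTorsionFree ℂ M
  have hJ : IsJordanDerivableAtZero m n (AddMonoidHom.mk' δ hadd) := hzero
  exact hJ.smul_op_smul_map_eq hδ1 hmn hP a

/-- `P·δ(A)·P = P·δ(PAP)·P` for every idempotent `P`. -/
theorem mn_jordan_derivable_at_zero_corner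
    {A M : Type*} [Ring A] [Algebra ℂ A]
    [AddCommGroup M] [Module ℂ M] [Module A M] [Module Aᵐᵒᵖ M]
    [SMulCommClass A Aᵐᵒᵖ M]
    (m n : ℕ) (hm : 0 < m) (hn : 0 < n) (hmn : m ≠ n)
    (δ : A → M) (hadd : ∀ a b : A, δ (a + b) = δ a + δ b)
    (hδ1 : δ 1 = 0)
    (hzero : ∀ X Y : A, X * Y = 0 → Y * X = 0 →
      (m + n) • δ (X * Y + Y * X) =
        (2 * m) • (op Y • δ X) + (2 * m) • (op X • δ Y)
          + (2 * n) • (X • δ Y) + (2 * n) • (Y • δ X))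
    (P : A) (hP : P * P = P) (a : A) :
    P • (op P • δ a) = P • (op P • δ (P * a * P)) :=
  mn_jordan_derivable_at_zero_corner_general m n hmn δ hadd hδ1 hzero P hP a
end

section
/- Let A be a unital algebra over ℂ, M a unital A-bimodule, and m, n positive integers with m ≠ n. Let δ : A → M be an (m,n)-Jordan derivable mapping at zero with δ(1) = 0. Suppose J is a two-sided ideal of A contained in the subalgebra generated by idempotents. Then for all A, B ∈ A and S ∈ J, S·(δ(AB) − A·δ(B)) = 0. -/
open MulOpposite

section Aux

variable {A M : Type*} [Ring A] [Algebra ℂ A]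
    [AddCommGroup M] [Module ℂ M] [Module A M] [Module Aᵐᵒᵖ M]
    [SMulCommClass A Aᵐᵒᵖ M]

private lemma aux_nsmul_cancel {k : ℕ} (hk : k ≠ 0) {x : M} (h : k • x = 0) : x = 0 := by
  have h' : (k : ℂ) • x = 0 := by rw [Nat.cast_smul_eq_nsmul]; exact h
  rcases smul_eq_zero.mp h' with h | h
  · exact absurd (Nat.cast_eq_zero.mp h) hk
  · exact h

private lemma aux_nsmul_eq_cancel {k l : ℕ} (hkl : k ≠ l) {x : M} (h : k • x = l • x) :
    x = 0 := by
  have h' : ((k : ℂ) - l) • x = 0 := by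
    rw [sub_smul, Nat.cast_smul_eq_nsmul, Nat.cast_smul_eq_nsmul, h, sub_self]
  rcases smul_eq_zero.mp h' with h | h
  · exact absurd (Nat.cast_inj.mp (sub_eq_zero.mp h)) hkl
  · exact h

/-- Sandwich lemma: if `(m+n)•d = 2•(m•(dP) + n•(Pd))` for an idempotent `P`, then `d = 0`. -/
private lemma sandwich1 (m n : ℕ) (hm : 0 < m) (hn : 0 < n) (hmn : m ≠ n)
    {P : A} (hP : P * P = P) {d : M}
    (h : m • d + n • d =
      m • (op P • d) + m • (op P • d) + (n • (P • d) + n • (P • d))) :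
    d = 0 := by
  have hopop : op P • (op P • d) = op P • d := by rw [smul_smul, ← op_mul, hP]
  have hPP : P • (P • d) = P • d := by rw [smul_smul, hP]
  have hPPr : P • (P • (op P • d)) = P • (op P • d) := by rw [smul_smul, hP]
  -- apply `op P •` to h
  have h1 : m • (op P • d) + n • (op P • d) =
      m • (op P • d) + m • (op P • d) + (n • (P • (op P • d)) + n • (P • (op P • d))) := by
    have e := congrArg (fun x => op P • x) h
    simp only [smul_add] at e
    rw [smul_comm (op P) m d, smul_comm (op P) n d, smul_comm (op P) m (op P • d),
      smul_comm (op P) n (P • d), hopop, ← smul_comm P (op P) d] at e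
    exact e
  -- apply `P •` to h
  have h2 : m • (P • d) + n • (P • d) =
      m • (P • (op P • d)) + m • (P • (op P • d)) + (n • (P • d) + n • (P • d)) := by
    have e := congrArg (fun x => P • x) h
    simp only [smul_add] at e
    rw [smul_comm P m d, smul_comm P n d, smul_comm P m (op P • d),
      smul_comm P n (P • d), hPP] at e
    exact e
  -- apply `P •` to h1
  have h3 : m • (P • (op P • d)) + n • (P • (op P • d)) =
      m • (P • (op P • d)) + m • (P • (op P • d))
        + (n • (P • (op P • d)) + n • (P • (op P • d))) := by
    have e := congrArg (fun x => P • x) h1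
    simp only [smul_add] at e
    rw [smul_comm P m (op P • d), smul_comm P n (op P • d),
      smul_comm P n (P • (op P • d)), hPPr] at e
    exact e
  have hc0 : P • (op P • d) = 0 := by
    apply aux_nsmul_cancel (k := m + n) (by omega)
    have h4 : (m + n) • (P • (op P • d)) =
        (m • (P • (op P • d)) + m • (P • (op P • d))
          + (n • (P • (op P • d)) + n • (P • (op P • d))))
        - (m • (P • (op P • d)) + n • (P • (op P • d))) := by
      rw [add_nsmul]; abel
    rw [h4, ← h3, sub_self]
  have hr0 : op P • d = 0 := by
    apply aux_nsmul_eq_cancel (k := n) (l := m) hmn.symm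
    rw [hc0] at h1
    simp only [smul_zero, add_zero] at h1
    exact add_left_cancel h1
  have hl0 : P • d = 0 := by
    apply aux_nsmul_eq_cancel (k := m) (l := n) hmn
    rw [hc0] at h2
    simp only [smul_zero, zero_add] at h2
    exact add_right_cancel h2
  apply aux_nsmul_cancel (k := m + n) (by omega)
  rw [add_nsmul, h, hr0, hl0]
  simp

/-- Second sandwich: if `(m+n)•f = m•(fP) + n•(Pf)` for an idempotent `P`,
then `f = P·f·P`. -/
private lemma sandwich2 (m n : ℕ) (hm : 0 < m) (hn : 0 < n)
    {P : A} (hP : P * P = P) {f : M}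
    (h : m • f + n • f = m • (op P • f) + n • (P • f)) :
    f = P • (op P • f) := by
  have hopop : op P • (op P • f) = op P • f := by rw [smul_smul, ← op_mul, hP]
  have hPP : P • (P • f) = P • f := by rw [smul_smul, hP]
  have h1 : m • (op P • f) + n • (op P • f) =
      m • (op P • f) + n • (P • (op P • f)) := by
    have e := congrArg (fun x => op P • x) h
    simp only [smul_add] at e
    rw [smul_comm (op P) m f, smul_comm (op P) n f, smul_comm (op P) m (op P • f),
      smul_comm (op P) n (P • f), hopop, ← smul_comm P (op P) f] at e
    exact e
  have h2 : m • (P • f) + n • (P • f) =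
      m • (P • (op P • f)) + n • (P • f) := by
    have e := congrArg (fun x => P • x) h
    simp only [smul_add] at e
    rw [smul_comm P m f, smul_comm P n f, smul_comm P m (op P • f),
      smul_comm P n (P • f), hPP] at e
    exact e
  have hr : op P • f = P • (op P • f) := by
    have e : n • (op P • f) = n • (P • (op P • f)) := add_left_cancel h1
    have e0 : n • (op P • f - P • (op P • f)) = 0 := by rw [smul_sub, e, sub_self]
    exact sub_eq_zero.mp (aux_nsmul_cancel (by omega) e0)
  have hl : P • f = P • (op P • f) := by
    have e : m • (P • f) = m • (P • (op P • f)) := add_right_cancel h2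
    have e0 : m • (P • f - P • (op P • f)) = 0 := by rw [smul_sub, e, sub_self]
    exact sub_eq_zero.mp (aux_nsmul_cancel (by omega) e0)
  have e : m • f + n • f = m • (P • (op P • f)) + n • (P • (op P • f)) := by
    rw [h]
    exact congrArg₂ (· + ·) (congrArg (m • ·) hr) (congrArg (n • ·) hl)
  have e0 : (m + n) • (f - P • (op P • f)) = 0 := by
    rw [smul_sub, add_nsmul, e, add_nsmul, sub_self]
  exact sub_eq_zero.mp (aux_nsmul_cancel (by omega) e0)

end Aux

/-- Key separating-set step: `S·(δ(AB) − A·δ(B)) = 0` for all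
`S` in an ideal contained in the subring generated by idempotents. -/
theorem mn_jordan_derivable_at_zero_key_step
    {A M : Type*} [Ring A] [Algebra ℂ A]
    [AddCommGroup M] [Module ℂ M] [Module A M] [Module Aᵐᵒᵖ M]
    [SMulCommClass A Aᵐᵒᵖ M]
    (m n : ℕ) (hm : 0 < m) (hn : 0 < n) (hmn : m ≠ n)
    (δ : A → M) (hadd : ∀ a b : A, δ (a + b) = δ a + δ b)
    (hδ1 : δ 1 = 0)
    (hzero : ∀ X Y : A, X * Y = 0 → Y * X = 0 →
      (m + n) • δ (X * Y + Y * X) =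
        (2 * m) • (op Y • δ X) + (2 * m) • (op X • δ Y)
          + (2 * n) • (X • δ Y) + (2 * n) • (Y • δ X))
    (J : TwoSidedIdeal A)
    (hJsub : (J : Set A) ⊆ (Subring.closure {P : A | P * P = P} : Set A)) :
    ∀ (a b : A), ∀ S ∈ J, S • (δ (a * b) - a • δ b) = 0 := by
  -- basic consequences of additivity
  have hδ0 : δ 0 = 0 := by
    have h := hadd 0 0
    rw [add_zero] at h
    exact (right_eq_add.mp h)
  have hneg : ∀ x : A, δ (-x) = - δ x := by
    intro x
    have h := hadd x (-x)
    rw [add_neg_cancel, hδ0] at h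
    exact (neg_eq_of_add_eq_zero_right h.symm).symm
  have hsub : ∀ x y : A, δ (x - y) = δ x - δ y := by
    intro x y
    rw [sub_eq_add_neg, hadd, hneg, ← sub_eq_add_neg]
  -- the orthogonality identity, halved
  have hE : ∀ X Y : A, X * Y = 0 → Y * X = 0 →
      m • (op Y • δ X) + m • (op X • δ Y) + n • (X • δ Y) + n • (Y • δ X) = 0 := by
    intro X Y h1 h2
    have h := hzero X Y h1 h2
    rw [h1, h2, add_zero, hδ0, smul_zero] at h
    have h' : (2 : ℕ) • (m • (op Y • δ X) + m • (op X • δ Y)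
        + n • (X • δ Y) + n • (Y • δ X)) = 0 := by
      rw [smul_add, smul_add, smul_add, smul_smul, smul_smul, smul_smul, smul_smul]
      exact h.symm
    exact aux_nsmul_cancel (by norm_num) h'
  -- Step 1: δ vanishes on idempotents
  have L2 : ∀ P : A, P * P = P → δ P = 0 := by
    intro P hP
    have hPQ : P * (1 - P) = 0 := by rw [mul_sub, mul_one, hP, sub_self]
    have hQP : (1 - P) * P = 0 := by rw [sub_mul, one_mul, hP, sub_self]
    have hQ : δ (1 - P) = - δ P := by rw [hsub, hδ1, zero_sub]
    have h := hE P (1 - P) hPQ hQP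
    rw [hQ] at h
    apply sandwich1 m n hm hn hmn hP
    rw [← sub_eq_zero, ← h]
    simp only [op_sub, op_one, sub_smul, one_smul, smul_neg, smul_sub, smul_add]
    abel
  -- Step 2: δ vanishes on `P T (1-P)`
  have L3 : ∀ P : A, P * P = P → ∀ T : A, δ (P * T * (1 - P)) = 0 := by
    intro P hP T
    have hPQ : P * (1 - P) = 0 := by rw [mul_sub, mul_one, hP, sub_self]
    have hQP : (1 - P) * P = 0 := by rw [sub_mul, one_mul, hP, sub_self]
    have hQ2 : (1 - P) * (1 - P) = 1 - P := by rw [mul_sub, mul_one, hQP, sub_zero]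
    set N := P * T * (1 - P) with hN
    have hPN : P * N = N := by rw [hN, ← mul_assoc, ← mul_assoc, hP]
    have hNP : N * P = 0 := by rw [hN, mul_assoc, hQP, mul_zero]
    have hQN : (1 - P) * N = 0 := by
      rw [hN, ← mul_assoc, ← mul_assoc, hQP, zero_mul, zero_mul]
    have hNQ : N * (1 - P) = N := by rw [hN, mul_assoc, hQ2]
    have hNN : N * N = 0 := by
      nth_rewrite 1 [hN]
      rw [mul_assoc, hQN, mul_zero]
    have orth1 : (P + N) * ((1 - P) - N) = 0 := by
      simp only [add_mul, mul_sub, mul_one, hP, hPN, hNP, hNN]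
      abel
    have orth2 : ((1 - P) - N) * (P + N) = 0 := by
      simp only [sub_mul, mul_add, one_mul, hP, hPN, hNP, hNN]
      abel
    have hδP := L2 P hP
    have hδQ : δ (1 - P) = 0 := L2 (1 - P) hQ2
    have hdPN : δ (P + N) = δ N := by rw [hadd, hδP, zero_add]
    have hdQN : δ ((1 - P) - N) = - δ N := by rw [hsub, hδQ, zero_sub]
    have hIII := hE N N hNN hNN
    have h := hE (P + N) ((1 - P) - N) orth1 orth2
    rw [hdPN, hdQN] at h
    have h' := congrArg₂ (· + ·) h hIII
    simp only [add_zero] at h'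
    apply sandwich1 m n hm hn hmn hP
    rw [← sub_eq_zero, ← h']
    simp only [op_add, op_sub, op_one, add_smul, sub_smul, one_smul, smul_neg,
      smul_sub, smul_add]
    abel
  -- Step 3: δ (P T P) = P · δ(P T P) · P
  have L4 : ∀ P : A, P * P = P → ∀ T : A,
      δ (P * T * P) = P • (op P • δ (P * T * P)) := by
    intro P hP T
    have hPQ : P * (1 - P) = 0 := by rw [mul_sub, mul_one, hP, sub_self]
    have hQP : (1 - P) * P = 0 := by rw [sub_mul, one_mul, hP, sub_self]
    have hQ2 : (1 - P) * (1 - P) = 1 - P := by rw [mul_sub, mul_one, hQP, sub_zero]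
    have hδQ : δ (1 - P) = 0 := L2 (1 - P) hQ2
    have orth1 : (P * T * P) * (1 - P) = 0 := by rw [mul_assoc, hPQ, mul_zero]
    have orth2 : (1 - P) * (P * T * P) = 0 := by
      rw [← mul_assoc, ← mul_assoc, hQP, zero_mul, zero_mul]
    have h := hE (P * T * P) (1 - P) orth1 orth2
    rw [hδQ] at h
    simp only [smul_zero, add_zero] at h
    apply sandwich2 m n hm hn hP
    rw [← sub_eq_zero, ← h]
    simp only [op_sub, op_one, sub_smul, one_smul, smul_sub]
    abel
  -- Step 4: δ (P T) = P · δ T for every idempotent P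
  have L5 : ∀ P : A, P * P = P → ∀ T : A, δ (P * T) = P • δ T := by
    intro P hP T
    have hPQ : P * (1 - P) = 0 := by rw [mul_sub, mul_one, hP, sub_self]
    have hQP : (1 - P) * P = 0 := by rw [sub_mul, one_mul, hP, sub_self]
    have hQ2 : (1 - P) * (1 - P) = 1 - P := by rw [mul_sub, mul_one, hQP, sub_zero]
    have hsplit2 : δ (P * T) = δ (P * T * P) + δ (P * T * (1 - P)) := by
      rw [← hadd]; exact congrArg δ (by noncomm_ring)
    have step1 : δ (P * T) = δ (P * T * P) := by
      rw [hsplit2, L3 P hP T, add_zero]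
    have hQTP : δ ((1 - P) * T * P) = 0 := by
      have h := L3 (1 - P) hQ2 T
      rwa [sub_sub_cancel] at h
    have hTsplit : δ T = δ (P * T * P) + δ (P * T * (1 - P))
        + (δ ((1 - P) * T * P) + δ ((1 - P) * T * (1 - P))) := by
      rw [← hadd, ← hadd, ← hadd]; exact congrArg δ (by noncomm_ring)
    have hT : δ T = δ (P * T * P) + δ ((1 - P) * T * (1 - P)) := by
      rw [hTsplit, L3 P hP T, hQTP, add_zero, zero_add]
    have h4 := L4 P hP T
    have hPf : P • δ (P * T * P) = δ (P * T * P) := by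
      conv_lhs => rw [h4]
      rw [smul_smul, hP, ← h4]
    have h4' := L4 (1 - P) hQ2 T
    have hPg : P • δ ((1 - P) * T * (1 - P)) = 0 := by
      rw [h4', smul_smul, hPQ, zero_smul]
    rw [step1, hT, smul_add, hPg, add_zero, hPf]
  -- Step 5: extend to the subring generated by idempotents
  have L6 : ∀ S : A, S ∈ Subring.closure {P : A | P * P = P} →
      ∀ T : A, δ (S * T) = S • δ T := by
    intro S hS
    refine Subring.closure_induction
      (p := fun x _ => ∀ T : A, δ (x * T) = x • δ T) ?_ ?_ ?_ ?_ ?_ ?_ hS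
    · exact fun x hx T => L5 x hx T
    · intro T; rw [zero_mul, hδ0, zero_smul]
    · intro T; rw [one_mul, one_smul]
    · intro x y hx hy ihx ihy T; rw [add_mul, hadd, ihx, ihy, add_smul]
    · intro x hx ihx T; rw [neg_mul, hneg, ihx, neg_smul]
    · intro x y hx hy ihx ihy T
      rw [mul_assoc, ihx (y * T), ihy T, mul_smul]
  -- conclusion
  intro a b S hS
  have hSc := hJsub hS
  have hSac := hJsub (J.mul_mem_right S a hS)
  have e1 : δ (S * (a * b)) = S • δ (a * b) := L6 S hSc (a * b)
  have e2 : δ ((S * a) * b) = (S * a) • δ b := L6 (S * a) hSac b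
  rw [smul_sub, ← e1, ← mul_assoc, e2, mul_smul, sub_self]
end
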